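/- arXiv:1202.2475 — 2 statements merged into one kernel-verified Lean document; each statement's English description precedes it below -/
import Mathlib

section
/- If α! ≥ d², then the probability that a uniformly random d-digit string over d symbols has no symbol repeating α or more times is at least 1 - 1/d. -/
/-- If α! ≥ d², a uniformly random d-digit string over d symbols has no symbol
repeating α or more times with probability at least 1 - 1/d. -/
theorem stmt2 (d α : ℕ) (hd : 1 ≤ d) (hα : 1 ≤ α) (h : d ^ 2 ≤ Nat.factorial α) :
    (1 : ℚ) - 1 / (d : ℚ) ≤
      (Nat.card {f : Fin d → Fin d // ∀ i : Fin d, (Finset.univ.filter (fun j => f j = i)).card < α} : ℚ)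
        / (d : ℚ) ^ d := by
  classical
  have e1 : d + 1 = d - 1 + 2 := by omega
  have e2 : d = d - 1 + 1 := by omega
  have e3 : d - 1 ≤ d := by omega
  set P : (Fin d → Fin d) → Prop :=
    fun f => ∀ i : Fin d, (Finset.univ.filter (fun j => f j = i)).card < α with hP
  have hcard : Nat.card {f : Fin d → Fin d // ∀ i : Fin d,
      (Finset.univ.filter (fun j => f j = i)).card < α} = (Finset.univ.filter P).card := by
    rw [Nat.card_eq_fintype_card, Fintype.card_subtype]
  -- bound on bad set
  have hpiece : ∀ i : Fin d, ∀ T ∈ (Finset.univ : Finset (Fin d)).powersetCard α,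
      (Finset.univ.filter (fun f : Fin d → Fin d => ∀ j ∈ T, f j = i)).card ≤ d ^ (d - α) := by
    intro i T hT
    rw [Finset.mem_powersetCard] at hT
    have hle : (Finset.univ.filter (fun f : Fin d → Fin d => ∀ j ∈ T, f j = i)).card
        ≤ (Finset.univ : Finset ({j : Fin d // j ∉ T} → Fin d)).card := by
      apply Finset.card_le_card_of_injOn (fun f j => f j.1)
      · intro _ _; exact Finset.mem_univ _
      · intro f hf g hg hfg
        simp only [Finset.coe_filter, Set.mem_setOf_eq] at hf hg
        funext j
        by_cases hj : j ∈ T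
        · rw [hf.2 j hj, hg.2 j hj]
        · exact congrFun hfg ⟨j, hj⟩
    calc (Finset.univ.filter (fun f : Fin d → Fin d => ∀ j ∈ T, f j = i)).card
        ≤ (Finset.univ : Finset ({j : Fin d // j ∉ T} → Fin d)).card := hle
      _ = d ^ (d - α) := by
          rw [Finset.card_univ, Fintype.card_fun]
          congr 1
          · exact Fintype.card_fin d
          · rw [Fintype.card_subtype_compl, Fintype.card_fin, Fintype.card_coe, hT.2]
  have hbadsub : (Finset.univ.filter (fun f => ¬ P f)) ⊆
      ((Finset.univ : Finset (Fin d)) ×ˢ (Finset.univ : Finset (Fin d)).powersetCard α).biUnion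
        (fun p => Finset.univ.filter (fun f : Fin d → Fin d => ∀ j ∈ p.2, f j = p.1)) := by
    intro f hf
    simp only [Finset.mem_filter, hP, not_forall, not_lt] at hf
    obtain ⟨-, i, hi⟩ := hf
    obtain ⟨T, hT1, hT2⟩ := Finset.exists_subset_card_eq hi
    refine Finset.mem_biUnion.2 ⟨(i, T), ?_, ?_⟩
    · exact Finset.mem_product.2 ⟨Finset.mem_univ _,
        Finset.mem_powersetCard.2 ⟨Finset.subset_univ _, hT2⟩⟩
    · refine Finset.mem_filter.2 ⟨Finset.mem_univ _, fun j hj => ?_⟩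
      have := hT1 hj
      simpa using (Finset.mem_filter.1 this).2
  have hbad : (Finset.univ.filter (fun f => ¬ P f)).card
      ≤ d * Nat.choose d α * d ^ (d - α) := by
    calc (Finset.univ.filter (fun f => ¬ P f)).card
        ≤ _ := Finset.card_le_card hbadsub
      _ ≤ ∑ p ∈ (Finset.univ : Finset (Fin d)) ×ˢ (Finset.univ : Finset (Fin d)).powersetCard α,
            (Finset.univ.filter (fun f : Fin d → Fin d => ∀ j ∈ p.2, f j = p.1)).card :=
          Finset.card_biUnion_le
      _ ≤ ∑ _p ∈ (Finset.univ : Finset (Fin d)) ×ˢ (Finset.univ : Finset (Fin d)).powersetCard α,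
            d ^ (d - α) := by
          apply Finset.sum_le_sum
          intro p hp
          exact hpiece p.1 p.2 (Finset.mem_product.1 hp).2
      _ = d * Nat.choose d α * d ^ (d - α) := by
          rw [Finset.sum_const, Finset.card_product, Finset.card_univ, Fintype.card_fin,
            Finset.card_powersetCard, Finset.card_univ, Fintype.card_fin, smul_eq_mul, mul_assoc]
  -- numeric bound: bad ≤ d^(d-1)
  have hdesc : Nat.descFactorial d α * d ^ (d - α) ≤ d ^ d := by
    by_cases hαd : α ≤ d
    · calc Nat.descFactorial d α * d ^ (d - α) ≤ d ^ α * d ^ (d - α) :=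
          Nat.mul_le_mul_right _ (Nat.descFactorial_le_pow d α)
        _ = d ^ d := by rw [← pow_add, Nat.add_sub_cancel' hαd]
    · rw [Nat.descFactorial_eq_zero_iff_lt.2 (lt_of_not_ge hαd), zero_mul]
      exact Nat.zero_le _
  have hbad2 : (Finset.univ.filter (fun f => ¬ P f)).card ≤ d ^ (d - 1) := by
    have key : (Finset.univ.filter (fun f => ¬ P f)).card * d ^ 2 ≤ d ^ (d - 1) * d ^ 2 := by
      calc (Finset.univ.filter (fun f => ¬ P f)).card * d ^ 2
          ≤ (d * Nat.choose d α * d ^ (d - α)) * Nat.factorial α :=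
            Nat.mul_le_mul hbad h
        _ = d * (Nat.descFactorial d α * d ^ (d - α)) := by
            rw [Nat.descFactorial_eq_factorial_mul_choose]; ring
        _ ≤ d * d ^ d := Nat.mul_le_mul_left _ hdesc
        _ = d ^ (d - 1) * d ^ 2 := by
            rw [← pow_add, ← pow_succ']
            congr 1
    exact Nat.le_of_mul_le_mul_right key (by positivity)
  have hsplit : (Finset.univ.filter P).card + (Finset.univ.filter (fun f => ¬ P f)).card
      = d ^ d := by
    rw [Finset.card_filter_add_card_filter_not, Finset.card_univ, Fintype.card_fun,
      Fintype.card_fin]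
  have hgood : d ^ d - d ^ (d - 1) ≤ (Finset.univ.filter P).card := by
    have := Nat.eq_sub_of_add_eq hsplit
    rw [this]
    exact Nat.sub_le_sub_left hbad2 _
  -- rational arithmetic
  have hd0 : (0 : ℚ) < (d : ℚ) := by exact_mod_cast hd
  have hdd : (0 : ℚ) < (d : ℚ) ^ d := by positivity
  rw [hcard, le_div_iff₀ hdd]
  have h1 : ((1 : ℚ) - 1 / (d : ℚ)) * (d : ℚ) ^ d = (d : ℚ) ^ d - (d : ℚ) ^ (d - 1) := by
    have : ((d : ℚ)) ^ d = (d : ℚ) * (d : ℚ) ^ (d - 1) := by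
      rw [← pow_succ']
      congr 1
    field_simp
    rw [this]
    ring
  rw [h1]
  have hcast : ((d ^ d - d ^ (d - 1) : ℕ) : ℚ) = (d : ℚ) ^ d - (d : ℚ) ^ (d - 1) := by
    rw [Nat.cast_sub (Nat.pow_le_pow_right hd e3)]
    push_cast
    ring
  rw [← hcast]
  exact_mod_cast hgood
end

section
/- Suppose z ∈ ℂ, and the roots α₁,...,α_d satisfy: min_j |z - α_j| = c·2^{-K} with c ∈ (1/2, 1], and for every k the number of roots in the annulus {w : 2^{-k-1} < |w - z| ≤ 2^{-k}} is at most π C d 4^{-k} when π4^{-k} ≥ 1/d and at most C otherwise. Then |∑_j 1/(z - α_j)| ≤ 2^{K+1} + 16π C d + C·2^{K+2}. -/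
lemma geom1 : ∀ (K : ℤ), -2 ≤ K →
    ∑ m ∈ Finset.Icc (-2 : ℤ) K, (2 : ℝ) ^ (-m) = 8 - (2:ℝ)^(-K) := by
  refine Int.le_induction ?_ ?_
  · norm_num
  · intro K hK ih
    have hins : Finset.Icc (-2:ℤ) (K+1) = insert (K+1) (Finset.Icc (-2) K) := by
      ext x; simp only [Finset.mem_insert, Finset.mem_Icc]; omega
    rw [hins, Finset.sum_insert (by simp), ih,
      show -(K+1) = -K - 1 by ring, zpow_sub₀ (two_ne_zero : (2:ℝ) ≠ 0)]
    ring

lemma geom2 : ∀ (K : ℤ), -2 ≤ K →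
    ∑ m ∈ Finset.Icc (-2 : ℤ) K, (2 : ℝ) ^ (m+1) = (2:ℝ)^(K+2) - 1/2 := by
  refine Int.le_induction ?_ ?_
  · norm_num
  · intro K hK ih
    have hins : Finset.Icc (-2:ℤ) (K+1) = insert (K+1) (Finset.Icc (-2) K) := by
      ext x; simp only [Finset.mem_insert, Finset.mem_Icc]; omega
    rw [hins, Finset.sum_insert (by simp), ih,
      show K+1+2 = (K+2)+1 by ring, zpow_add₀ (two_ne_zero : (2:ℝ) ≠ 0) (K+2) 1]
    ring

/-- If min_j |z - αⱼ| = c·2^{-K} with c ∈ (1/2, 1], all roots lie in the annuli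
T_k = {w : 2^{-k-1} < |w - z| ≤ 2^{-k}} for -2 ≤ k ≤ K, and the number of roots in T_k
is at most πCd4^{-k} when π4^{-k} ≥ 1/d and at most C otherwise, then
|∑_j 1/(z - αⱼ)| ≤ 2^{K+1} + 16πCd + C·2^{K+2}. -/
theorem stmt14 (d : ℕ) (hd : 1 ≤ d) (α : Fin d → ℂ) (z : ℂ)
    (K : ℤ) (hK : -2 ≤ K) (C : ℝ) (hC : 1 ≤ C) (c : ℝ) (hc : 1 / 2 < c) (hc1 : c ≤ 1)
    (hmin : IsLeast {r : ℝ | ∃ j : Fin d, r = ‖z - α j‖} (c * (2 : ℝ) ^ (-K)))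
    (hT : ∀ j, ∃ k : ℤ, -2 ≤ k ∧ k ≤ K ∧
      (2 : ℝ) ^ (-k - 1) < ‖α j - z‖ ∧ ‖α j - z‖ ≤ (2 : ℝ) ^ (-k))
    (hcount : ∀ k : ℤ,
      ((1 : ℝ) / d ≤ Real.pi * (4 : ℝ) ^ (-k) →
        (Nat.card {j : Fin d //
            (2 : ℝ) ^ (-k - 1) < ‖α j - z‖ ∧ ‖α j - z‖ ≤ (2 : ℝ) ^ (-k)} : ℝ)
          ≤ Real.pi * C * d * (4 : ℝ) ^ (-k)) ∧
      (Real.pi * (4 : ℝ) ^ (-k) < 1 / d →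
        (Nat.card {j : Fin d //
            (2 : ℝ) ^ (-k - 1) < ‖α j - z‖ ∧ ‖α j - z‖ ≤ (2 : ℝ) ^ (-k)} : ℝ) ≤ C)) :
    ‖∑ j, 1 / (z - α j)‖ ≤ (2 : ℝ) ^ (K + 1) + 16 * Real.pi * C * d + C * (2 : ℝ) ^ (K + 2) := by
  classical
  choose k hk1 hk2 hk3 hk4 using hT
  have hπ := Real.pi_pos
  have h2 : (0:ℝ) < 2 := two_pos
  -- Step 1: triangle inequality and per-root bound
  have step1 : ‖∑ j, 1 / (z - α j)‖ ≤ ∑ j, (2:ℝ) ^ (k j + 1) := by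
    refine (norm_sum_le _ _).trans (Finset.sum_le_sum fun j _ => ?_)
    rw [norm_div, norm_one]
    have hn : ‖z - α j‖ = ‖α j - z‖ := by
      rw [show z - α j = -(α j - z) by ring, norm_neg]
    have hpos : (0:ℝ) < ‖α j - z‖ := lt_trans (zpow_pos h2 _) (hk3 j)
    rw [hn, div_le_iff₀ hpos]
    calc (1:ℝ) = (2:ℝ) ^ (k j + 1) * (2:ℝ) ^ (-(k j) - 1) := by
          rw [← zpow_add₀ (two_ne_zero : (2:ℝ) ≠ 0)]
          norm_num
      _ ≤ (2:ℝ) ^ (k j + 1) * ‖α j - z‖ := by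
          exact mul_le_mul_of_nonneg_left (le_of_lt (hk3 j)) (le_of_lt (zpow_pos h2 _))
  -- Step 2: group by annulus index
  have step2 : ∑ j, (2:ℝ) ^ (k j + 1)
      = ∑ m ∈ Finset.Icc (-2:ℤ) K,
          ((Finset.univ.filter (fun j => k j = m)).card : ℝ) * (2:ℝ) ^ (m + 1) := by
    rw [← Finset.sum_fiberwise_of_maps_to (g := k) (t := Finset.Icc (-2:ℤ) K)
      (fun j _ => Finset.mem_Icc.mpr ⟨hk1 j, hk2 j⟩)]
    refine Finset.sum_congr rfl fun m _ => ?_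
    rw [Finset.sum_congr rfl (fun j hj => by
      rw [(Finset.mem_filter.mp hj).2]),
      Finset.sum_const, nsmul_eq_mul]
  -- Step 3: per-annulus count bound
  have hcard : ∀ m : ℤ, ((Finset.univ.filter (fun j => k j = m)).card : ℝ)
      ≤ (Nat.card {j : Fin d //
          (2 : ℝ) ^ (-m - 1) < ‖α j - z‖ ∧ ‖α j - z‖ ≤ (2 : ℝ) ^ (-m)} : ℝ) := by
    intro m
    rw [Nat.card_eq_fintype_card, Fintype.card_subtype]
    have hsub : (Finset.univ.filter (fun j => k j = m)) ⊆
        Finset.univ.filter (fun j => (2 : ℝ) ^ (-m - 1) < ‖α j - z‖ ∧ ‖α j - z‖ ≤ (2 : ℝ) ^ (-m)) := by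
      intro j hj
      have hjm := (Finset.mem_filter.mp hj).2
      refine Finset.mem_filter.mpr ⟨Finset.mem_univ _, ?_, ?_⟩
      · rw [← hjm]; exact hk3 j
      · rw [← hjm]; exact hk4 j
    exact Nat.cast_le.mpr (Finset.card_le_card hsub)
  have step3 : ∀ m ∈ Finset.Icc (-2:ℤ) K,
      ((Finset.univ.filter (fun j => k j = m)).card : ℝ) * (2:ℝ) ^ (m + 1)
        ≤ 2 * Real.pi * C * d * (2:ℝ) ^ (-m) + C * (2:ℝ) ^ (m + 1) := by
    intro m _
    have h4 : (4:ℝ) ^ (-m) = (2:ℝ) ^ (-m) * (2:ℝ) ^ (-m) := by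
      rw [← zpow_add₀ (two_ne_zero : (2:ℝ) ≠ 0), show (4:ℝ) = 2^(2:ℤ) by norm_num,
        ← zpow_mul]
      ring_nf
    have h2pos : (0:ℝ) < (2:ℝ) ^ (m+1) := zpow_pos h2 _
    have h2pos' : (0:ℝ) < (2:ℝ) ^ (-m) := zpow_pos h2 _
    rcases le_or_gt ((1:ℝ)/d) (Real.pi * (4:ℝ)^(-m)) with hcase | hcase
    · have hcnt := (hcount m).1 hcase
      have := hcard m
      have hb : ((Finset.univ.filter (fun j => k j = m)).card : ℝ)
          ≤ Real.pi * C * d * (4:ℝ)^(-m) := le_trans (hcard m) hcnt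
      have key : Real.pi * C * d * (4:ℝ)^(-m) * (2:ℝ)^(m+1)
          = 2 * Real.pi * C * d * (2:ℝ)^(-m) := by
        rw [h4]
        have : (2:ℝ)^(-m) * (2:ℝ)^(m+1) = 2 := by
          rw [← zpow_add₀ (two_ne_zero : (2:ℝ) ≠ 0)]
          norm_num
        calc Real.pi * C * d * ((2:ℝ)^(-m) * (2:ℝ)^(-m)) * (2:ℝ)^(m+1)
            = Real.pi * C * d * (2:ℝ)^(-m) * ((2:ℝ)^(-m) * (2:ℝ)^(m+1)) := by ring
          _ = 2 * Real.pi * C * d * (2:ℝ)^(-m) := by rw [this]; ring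
      have hCd : (0:ℝ) ≤ C * (2:ℝ)^(m+1) :=
        mul_nonneg (le_trans zero_le_one hC) h2pos.le
      nlinarith [mul_le_mul_of_nonneg_right hb h2pos.le]
    · have hcnt := (hcount m).2 hcase
      have hb : ((Finset.univ.filter (fun j => k j = m)).card : ℝ) ≤ C :=
        le_trans (hcard m) hcnt
      have hpos2 : (0:ℝ) ≤ 2 * Real.pi * C * d * (2:ℝ)^(-m) := by
        have : (0:ℝ) ≤ C := le_trans zero_le_one hC
        positivity
      nlinarith [mul_le_mul_of_nonneg_right hb h2pos.le]
  -- Combine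
  have total : ∑ m ∈ Finset.Icc (-2:ℤ) K,
      ((Finset.univ.filter (fun j => k j = m)).card : ℝ) * (2:ℝ) ^ (m + 1)
      ≤ 2 * Real.pi * C * d * (8 - (2:ℝ)^(-K)) + C * ((2:ℝ)^(K+2) - 1/2) := by
    calc _ ≤ ∑ m ∈ Finset.Icc (-2:ℤ) K,
          (2 * Real.pi * C * d * (2:ℝ) ^ (-m) + C * (2:ℝ) ^ (m + 1)) :=
        Finset.sum_le_sum step3
      _ = 2 * Real.pi * C * d * (∑ m ∈ Finset.Icc (-2:ℤ) K, (2:ℝ)^(-m))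
          + C * (∑ m ∈ Finset.Icc (-2:ℤ) K, (2:ℝ)^(m+1)) := by
        rw [Finset.sum_add_distrib, Finset.mul_sum, Finset.mul_sum]
      _ = _ := by rw [geom1 K hK, geom2 K hK]
  have hC0 : (0:ℝ) ≤ C := le_trans zero_le_one hC
  have hd0 : (0:ℝ) ≤ (d:ℝ) := Nat.cast_nonneg d
  have h2K : (0:ℝ) < (2:ℝ)^(K+1) := zpow_pos h2 _
  have h2K' : (0:ℝ) < (2:ℝ)^(-K) := zpow_pos h2 _
  calc ‖∑ j, 1 / (z - α j)‖ ≤ _ := step1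
    _ = _ := step2
    _ ≤ 2 * Real.pi * C * d * (8 - (2:ℝ)^(-K)) + C * ((2:ℝ)^(K+2) - 1/2) := total
    _ ≤ (2 : ℝ) ^ (K + 1) + 16 * Real.pi * C * d + C * (2 : ℝ) ^ (K + 2) := by
      nlinarith [mul_nonneg (mul_nonneg (mul_nonneg hπ.le hC0) hd0) h2K'.le]
end
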